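/- arXiv:1904.12838 — 3 statements merged into one kernel-verified Lean document; each statement's English description precedes it below -/
import Mathlib

section
/- Let $\lambda, \sigma^2 > 0$ and let $(\eta_t)_{t\geq 1}$ be a nonincreasing sequence with $0 < \eta_t\lambda < 1$ for all $t$. Define $s(\eta,\lambda) = \frac{\lambda\sigma^2\eta^2}{1-(1-\eta\lambda)^2}$ and the sequence $v_0 \geq 0$, $v_{t+1} = (1-\eta_{t+1}\lambda)^2 v_t + \lambda\sigma^2\eta_{t+1}^2$. If $s(\eta_t,\lambda) \leq v_0$ for all $t \leq T$, then $v_T \geq s(\eta_T,\lambda)$. -/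
lemma s_eq_aux (lam σ η : ℝ) (h1 : 0 < η * lam) (h2 : η * lam < 1) :
    lam * σ ^ 2 * η ^ 2 / (1 - (1 - η * lam) ^ 2) = σ ^ 2 * η / (2 - η * lam) := by
  have hd : 1 - (1 - η * lam) ^ 2 = η * lam * (2 - η * lam) := by ring
  have h2' : 0 < 2 - η * lam := by linarith
  rw [hd, div_eq_div_iff (by positivity) h2'.ne']
  ring

/-- If the one-dimensional SGD variance recursion with nonincreasing step sizes
starts above all the stationary values `s(η_t, λ)` for `t ≤ T`, then at time `T`
it is still at least the current stationary value `s(η_T, λ)`. -/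
theorem stmt_1 (lam σ : ℝ) (hlam : 0 < lam) (hσ : 0 < σ ^ 2)
    (η : ℕ → ℝ) (hmono : ∀ t, η (t + 1) ≤ η t)
    (hpos : ∀ t, 0 < η t * lam) (hlt : ∀ t, η t * lam < 1)
    (v : ℕ → ℝ) (hv0 : 0 ≤ v 0)
    (hrec : ∀ t, v (t + 1) = (1 - η (t + 1) * lam) ^ 2 * v t + lam * σ ^ 2 * (η (t + 1)) ^ 2)
    (T : ℕ)
    (hstart : ∀ t ≤ T, lam * σ ^ 2 * (η t) ^ 2 / (1 - (1 - η t * lam) ^ 2) ≤ v 0) :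
    lam * σ ^ 2 * (η T) ^ 2 / (1 - (1 - η T * lam) ^ 2) ≤ v T := by
  induction T with
  | zero => exact hstart 0 le_rfl
  | succ T ih =>
    have hvT : lam * σ ^ 2 * (η T) ^ 2 / (1 - (1 - η T * lam) ^ 2) ≤ v T :=
      ih (fun t ht => hstart t (ht.trans (Nat.le_succ T)))
    have ha := hpos (T + 1)
    have ha2 := hlt (T + 1)
    have hb := hpos T
    have hb2 := hlt T
    have h2a : 0 < 2 - η (T + 1) * lam := by linarith
    have h2b : 0 < 2 - η T * lam := by linarith
    rw [s_eq_aux _ _ _ ha ha2]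
    rw [s_eq_aux _ _ _ hb hb2] at hvT
    have hmon : σ ^ 2 * η (T + 1) / (2 - η (T + 1) * lam) ≤ σ ^ 2 * η T / (2 - η T * lam) := by
      rw [div_le_div_iff₀ h2a h2b]
      nlinarith [mul_le_mul_of_nonneg_left (hmono T) hσ.le]
    have key : σ ^ 2 * η (T + 1) / (2 - η (T + 1) * lam) * (1 - (1 - η (T + 1) * lam) ^ 2)
        = lam * σ ^ 2 * (η (T + 1)) ^ 2 := by
      field_simp
      ring
    rw [hrec T]
    nlinarith [key, mul_le_mul_of_nonneg_left (hmon.trans hvT)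
      (sq_nonneg (1 - η (T + 1) * lam))]
end

section
/- Let $\lambda > 0$, $R^2 > 0$ with $\lambda \leq R^2$, let $T \geq 2$ be such that $\log_2 T$ is a positive integer, and let $\sigma^2 > 0$. Consider the step-decay variance sum $S = \sum_{\ell=1}^{\log_2 T} \frac{\sigma^2}{2^{\ell} R^2} \prod_{u=\ell+1}^{\log_2 T} \exp\left(-\frac{\lambda T}{2^u R^2 \log_2 T}\right)$. Then $S \leq \frac{2\sigma^2}{\lambda} \cdot \frac{\log_2 T}{T}$. -/
/-!
With `μ = λT/(R² n)` and `x_l = μ / 2^l`, the exponents in the product form a geometric tail, so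
the product equals `exp (x_n - x_l)` and the sum is `σ²/(R² μ) · ∑_l x_l exp (x_n - x_l)`, while the
bound is `σ²/(R² μ) · 2`. For `n ≥ 2` we have `x_n = λ/(R² n) ≤ 1/2`, and then the potential
`Φ_l = 2 exp (2/3 · (x_n - x_l))` dominates each term by `Φ_l - Φ_{l-1}` (as `x_{l-1} = 2 x_l`), so the
sum telescopes to at most `Φ_n = 2`. The case `n = 1` is a single term.
-/

open Finset Real

/-- Dividing by `exp (d - x)`, this is `x ≤ exp (-d/3) · 4 sinh (x/3)`, and `4 sinh (x/3) ≥ 4x/3`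
while `exp (-d/3) ≥ 5/6`. -/
lemma mul_exp_sub_le_two_mul_exp_sub {x d : ℝ} (hx : 0 ≤ x) (hd : d ≤ 1 / 2) :
    x * exp (d - x) ≤ 2 * exp (2 / 3 * (d - x)) - 2 * exp (2 / 3 * (d - 2 * x)) := by
  have hx_le : x ≤ exp (-(d / 3)) * (4 * sinh (x / 3)) := by
    have hsinh := self_le_sinh_iff.mpr (by positivity : 0 ≤ x / 3)
    nlinarith [add_one_le_exp (-(d / 3))]
  have h₁ : exp (2 / 3 * (d - x)) = exp (d - x) * exp (-(d / 3)) * exp (x / 3) := by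
    rw [← exp_add, ← exp_add]; ring_nf
  have h₂ : exp (2 / 3 * (d - 2 * x)) = exp (d - x) * exp (-(d / 3)) * exp (-(x / 3)) := by
    rw [← exp_add, ← exp_add]; ring_nf
  calc x * exp (d - x) ≤ exp (d - x) * (exp (-(d / 3)) * (4 * sinh (x / 3))) := by
        rw [mul_comm]; exact mul_le_mul_of_nonneg_left hx_le (exp_pos _).le
    _ = _ := by rw [h₁, h₂, sinh_eq]; ring

lemma sum_Icc_div_two_pow (μ : ℝ) {l n : ℕ} (hln : l ≤ n) :
    ∑ u ∈ Icc (l + 1) n, μ / 2 ^ u = μ / 2 ^ l - μ / 2 ^ n := by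
  induction n, hln using Nat.le_induction with
  | base => simp
  | succ n hln ih =>
    rw [sum_Icc_succ_top (by omega), ih, pow_succ]
    ring

lemma prod_Icc_exp_neg_div_two_pow (μ : ℝ) {l n : ℕ} (hln : l ≤ n) :
    ∏ u ∈ Icc (l + 1) n, exp (-(μ / 2 ^ u)) = exp (μ / 2 ^ n - μ / 2 ^ l) := by
  rw [← exp_sum, sum_neg_distrib, sum_Icc_div_two_pow μ hln, neg_sub]

lemma sum_Icc_one_eq_sum_range {M : Type*} [AddCommMonoid M] (f : ℕ → M) (n : ℕ) :
    ∑ l ∈ Icc 1 n, f l = ∑ l ∈ range n, f (l + 1) := by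
  rw [range_eq_Ico, sum_Ico_add', zero_add, Ico_add_one_right_eq_Icc]

lemma sum_Icc_div_two_pow_mul_exp_le_two {μ : ℝ} {n : ℕ} (hμ : 0 ≤ μ)
    (hd : μ / 2 ^ n ≤ 1 / 2) :
    ∑ l ∈ Icc 1 n, μ / 2 ^ l * exp (μ / 2 ^ n - μ / 2 ^ l) ≤ 2 := by
  set Φ : ℕ → ℝ := fun l ↦ 2 * exp (2 / 3 * (μ / 2 ^ n - μ / 2 ^ l))
  have hstep (l : ℕ) : μ / 2 ^ (l + 1) * exp (μ / 2 ^ n - μ / 2 ^ (l + 1)) ≤ Φ (l + 1) - Φ l := by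
    have h := mul_exp_sub_le_two_mul_exp_sub (x := μ / 2 ^ (l + 1)) (by positivity) hd
    rwa [show 2 * (μ / 2 ^ (l + 1)) = μ / 2 ^ l by rw [pow_succ]; field_simp] at h
  calc _ = ∑ l ∈ range n, μ / 2 ^ (l + 1) * exp (μ / 2 ^ n - μ / 2 ^ (l + 1)) :=
        sum_Icc_one_eq_sum_range _ n
    _ ≤ ∑ l ∈ range n, (Φ (l + 1) - Φ l) := sum_le_sum fun l _ ↦ hstep l
    _ = Φ n - Φ 0 := sum_range_sub Φ n
    _ ≤ 2 := by
        simp only [Φ, sub_self, mul_zero, exp_zero]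
        linarith [exp_pos (2 / 3 * (μ / 2 ^ n - μ / 2 ^ 0))]

theorem stmt_9_general (lam Rsq σ : ℝ) (hlam : 0 < lam) (hR : 0 < Rsq) (hlamR : lam ≤ Rsq)
    (n : ℕ) (T : ℕ) (hT : T = 2 ^ n) :
    (∑ l ∈ Finset.Icc 1 n, σ ^ 2 / (2 ^ l * Rsq) *
        ∏ u ∈ Finset.Icc (l + 1) n, Real.exp (-(lam * T) / (2 ^ u * Rsq * n))) ≤
      2 * σ ^ 2 / lam * (n / T) := by
  subst hT
  obtain hn | hn := le_or_gt n 1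
  · interval_cases n
    · simp
    · have : σ ^ 2 / (2 * Rsq) ≤ σ ^ 2 / lam := by gcongr; linarith
      norm_num
      exact this.trans_eq (by ring)
  set μ := lam * 2 ^ n / (Rsq * n) with hμ_def
  have hn₂ : (2 : ℝ) ≤ n := by exact_mod_cast hn
  have hμ : 0 < μ := by positivity
  have hd : μ / 2 ^ n ≤ 1 / 2 := by
    have hμn : μ / 2 ^ n = lam / (Rsq * n) := by rw [hμ_def]; field_simp
    rw [hμn, div_le_div_iff₀ (by positivity) two_pos]
    nlinarith
  have hterm : ∀ l ∈ Icc 1 n, σ ^ 2 / (2 ^ l * Rsq) *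
      ∏ u ∈ Icc (l + 1) n, exp (-(lam * ((2 ^ n : ℕ) : ℝ)) / (2 ^ u * Rsq * n)) =
      σ ^ 2 / (Rsq * μ) * (μ / 2 ^ l * exp (μ / 2 ^ n - μ / 2 ^ l)) := by
    intro l hl
    have hexp (u : ℕ) : -(lam * ((2 ^ n : ℕ) : ℝ)) / (2 ^ u * Rsq * n) = -(μ / 2 ^ u) := by
      rw [hμ_def]; push_cast; field_simp
    simp_rw [hexp, prod_Icc_exp_neg_div_two_pow μ (mem_Icc.mp hl).2]
    field_simp
  calc _ = σ ^ 2 / (Rsq * μ) * ∑ l ∈ Icc 1 n, μ / 2 ^ l * exp (μ / 2 ^ n - μ / 2 ^ l) := by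
        rw [mul_sum]; exact sum_congr rfl hterm
    _ ≤ σ ^ 2 / (Rsq * μ) * 2 :=
        mul_le_mul_of_nonneg_left (sum_Icc_div_two_pow_mul_exp_le_two (by positivity) hd)
          (by positivity)
    _ = _ := by
        rw [hμ_def]; push_cast; field_simp

/-- Core step-decay variance bound: with `T = 2^n` (so `log₂ T = n ≥ 1`),
`0 < λ ≤ R²`, the accumulated variance sum
`S = ∑_{ℓ=1}^{n} σ²/(2^ℓ R²) ∏_{u=ℓ+1}^{n} exp(-λT/(2^u R² n))`
satisfies `S ≤ (2σ²/λ) · (n/T)`. -/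
theorem stmt_9 (lam Rsq σ : ℝ) (hlam : 0 < lam) (hR : 0 < Rsq) (hlamR : lam ≤ Rsq)
    (hσ : 0 < σ ^ 2) (n : ℕ) (hn : 1 ≤ n) (T : ℕ) (hT : T = 2 ^ n) :
    (∑ l ∈ Finset.Icc 1 n, σ ^ 2 / (2 ^ l * Rsq) *
        ∏ u ∈ Finset.Icc (l + 1) n, Real.exp (-(lam * T) / (2 ^ u * Rsq * n))) ≤
      2 * σ ^ 2 / lam * (n / T) :=
  stmt_9_general lam Rsq σ hlam hR hlamR n T hT
end

section
/- Let $\mu, \kappa, \sigma^2 > 0$, let $\eta_{A+t} = \frac{1}{\mu(\kappa + t/2)}$ for $t \geq 0$, and let $\lambda \geq \mu$ satisfy $\lambda\eta_{A+t} \leq 1$ for all $t$. Suppose $v_0 \leq 2\eta_A \sigma^2 = \frac{2\sigma^2}{\mu\kappa}$, and define $v_t = (1-\lambda\eta_{A+t-1})^2 v_{t-1} + \lambda\sigma^2\eta_{A+t-1}^2$. Then $v_t \leq 2\eta_{A+t}\sigma^2$ for all $t \geq 0$. -/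
/-- Induction for the polynomial-decay middle phase: with step sizes
`η_t = 1/(μ(κ + t/2))`, eigenvalue `λ ≥ μ` with `λ η_t ≤ 1`, starting from
`v_0 ≤ 2 η_0 σ²`, the variance recursion stays bounded: `v_t ≤ 2 η_t σ²`. -/
theorem stmt_17 (μ κ σ : ℝ) (hμ : 0 < μ) (hκ : 0 < κ) (hσ : 0 < σ ^ 2)
    (η : ℕ → ℝ) (hη : ∀ t : ℕ, η t = 1 / (μ * (κ + t / 2)))
    (lam : ℝ) (hlam : μ ≤ lam) (hle : ∀ t : ℕ, lam * η t ≤ 1)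
    (v : ℕ → ℝ) (hv0 : v 0 ≤ 2 * η 0 * σ ^ 2)
    (hrec : ∀ t : ℕ, v (t + 1) = (1 - lam * η t) ^ 2 * v t + lam * σ ^ 2 * (η t) ^ 2) :
    ∀ t : ℕ, v t ≤ 2 * η t * σ ^ 2 := by
  intro t
  induction t with
  | zero => exact hv0
  | succ t ih =>
    have ha : (0:ℝ) < κ + (t:ℝ)/2 := by positivity
    have ha' : (0:ℝ) < κ + ((t:ℝ)+1)/2 := by positivity
    have he : η t = 1/(μ*(κ+(t:ℝ)/2)) := hη t
    have he' : η (t+1) = 1/(μ*(κ+((t:ℝ)+1)/2)) := by rw [hη]; push_cast; ring_nf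
    have hepos : 0 < η t := by rw [he]; positivity
    have hx : lam * η t ≤ 1 := hle t
    have hμe : μ * η t ≤ lam * η t := mul_le_mul_of_nonneg_right hlam hepos.le
    have h1 : v (t+1) ≤ ((1 - lam*η t)^2 + lam*η t/2) * (2 * η t * σ^2) := by
      rw [hrec t]
      have h := mul_le_mul_of_nonneg_left ih (sq_nonneg (1 - lam*η t))
      nlinarith [sq_nonneg (η t)]
    have h2 : (1 - lam*η t)^2 + lam*η t/2 ≤ 1 - μ*η t/2 := by
      nlinarith [mul_nonneg (sub_nonneg.2 hx) (le_trans (mul_pos hμ hepos).le hμe)]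
    have h3 : (1 - μ*η t/2) * (2*η t*σ^2) ≤ 2*η (t+1)*σ^2 := by
      have hb' : (0:ℝ) < μ * (κ + ((t:ℝ)+1)/2) := mul_pos hμ ha'
      have key : (1 - μ*η t/2) * (2*η t*σ^2)
          = (2*(κ+(t:ℝ)/2) - 1) * σ^2 / (μ*(κ+(t:ℝ)/2)^2) := by
        rw [he]; field_simp
      have key' : 2*η (t+1)*σ^2 = 2*σ^2/(μ*(κ+((t:ℝ)+1)/2)) := by rw [he']; ring
      rw [key, key', div_le_div_iff₀ (mul_pos hμ (pow_pos ha 2)) hb']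
      nlinarith [mul_pos hμ hσ]
    calc v (t+1) ≤ ((1 - lam*η t)^2 + lam*η t/2) * (2 * η t * σ^2) := h1
      _ ≤ (1 - μ*η t/2) * (2*η t*σ^2) := by
          apply mul_le_mul_of_nonneg_right h2 (by positivity)
      _ ≤ 2*η (t+1)*σ^2 := h3
end
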